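/- Let R be a ring, n ≥ 1 an integer, and 𝒳 a class of left R-modules. If {G_i}_{i∈I} is a family of Gorenstein n-𝒳-injective left R-modules, then the direct product ∏_{i∈I} G_i is a Gorenstein n-𝒳-injective left R-module. -/

import Mathlib

/- Common framework: `n`-presented modules, syzygies, special 𝒳-presented modules,
   Ext/Tor vanishing (Tor via a hand-rolled tensor product over a possibly
   noncommutative ring, since Mathlib's tensor product requires commutativity),
   `n`-𝒳-injective / `n`-𝒳-flat modules, and the Gorenstein versions. -/

universe u
open CategoryTheory LinearMap DirectSum

section Basic

variable (R : Type u) [Ring R]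

/-- `U` is an `n`-presented left `R`-module: there is an exact sequence
`F_n → ⋯ → F_0 → U → 0` with each `F_i` finitely generated free. -/
def IsNPresented : ℕ → ModuleCat.{u} R → Prop
  | 0, U => Module.Finite R U
  | n + 1, U => ∃ (F : ModuleCat.{u} R) (f : F →ₗ[R] U),
      Module.Free R F ∧ Module.Finite R F ∧ Function.Surjective f ∧
      IsNPresented n (ModuleCat.of R (LinearMap.ker f))

/-- `K` is a `j`-th syzygy of `U` computed from finitely generated free modules:
`IsSyzygy 0 U K` iff `K ≅ U`, and a `(j+1)`-st syzygy of `U` is a `j`-th syzygy of the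
kernel of a surjection from a finitely generated free module onto `U`. -/
def IsSyzygy : ℕ → ModuleCat.{u} R → ModuleCat.{u} R → Prop
  | 0, U, K => Nonempty (K ≃ₗ[R] U)
  | j + 1, U, K => ∃ (F : ModuleCat.{u} R) (f : F →ₗ[R] U),
      Module.Free R F ∧ Module.Finite R F ∧ Function.Surjective f ∧
      IsSyzygy j (ModuleCat.of R (LinearMap.ker f)) K

/-- `Ext_R^k(U, M) = 0`. -/
noncomputable def ExtVanishes (k : ℕ) (U M : ModuleCat.{u} R) : Prop :=
  Subsingleton (((Ext ℤ (ModuleCat.{u} R) k).obj (Opposite.op U)).obj M)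

variable (𝒳 : Set (ModuleCat.{u} R)) (n : ℕ)

/-- `K` is a special 𝒳-presented module: `K` is the image `K_{n-1} = Im(F_{n-1} → F_{n-2})`
arising from an `n`-presentation of some `U ∈ 𝒳` (with the convention `K = U` when `n = 1`),
i.e. `K` is an `(n-1)`-st syzygy of some `n`-presented `U ∈ 𝒳`. -/
def IsSpecialPresented (K : ModuleCat.{u} R) : Prop :=
  ∃ U ∈ 𝒳, IsNPresented R n U ∧ IsSyzygy R (n - 1) U K

/-- `M` is an `n`-𝒳-injective left `R`-module: `Ext_R^n(U, M) = 0` for every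
`n`-presented `U ∈ 𝒳`. -/
noncomputable def IsNXInjective (M : ModuleCat.{u} R) : Prop :=
  ∀ U ∈ 𝒳, IsNPresented R n U → ExtVanishes R n U M

/-- Projective dimension at most `m`. -/
def ProjDimLE : ℕ → ModuleCat.{u} R → Prop
  | 0, K => Module.Projective R K
  | m + 1, K => ∃ (P : ModuleCat.{u} R) (f : P →ₗ[R] K),
      Module.Projective R P ∧ Function.Surjective f ∧
      ProjDimLE m (ModuleCat.of R (LinearMap.ker f))

/-- Finite projective dimension. -/
def HasFiniteProjDim (K : ModuleCat.{u} R) : Prop := ∃ m, ProjDimLE R m K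

/-- `R` is left `n`-𝒳-coherent: every `n`-presented module in `𝒳` is `(n+1)`-presented. -/
def IsNXCoherent : Prop := ∀ U ∈ 𝒳, IsNPresented R n U → IsNPresented R (n + 1) U

/-- `M` has `n`-𝒳-injective dimension at most `m`:
`Ext_R^{n+i}(U, M) = 0` for all `i ≥ m + 1` and all `n`-presented `U ∈ 𝒳`. -/
noncomputable def NXInjDimLE (m : ℕ) (M : ModuleCat.{u} R) : Prop :=
  ∀ U ∈ 𝒳, IsNPresented R n U → ∀ i : ℕ, m + 1 ≤ i → ExtVanishes R (n + i) U M

/-- `M` has finite `n`-𝒳-injective dimension. -/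
noncomputable def HasFiniteNXInjDim (M : ModuleCat.{u} R) : Prop := ∃ m, NXInjDimLE R 𝒳 n m M

end Basic

section Tensor

variable (R : Type u) [Ring R]

/-- The defining relations of the tensor product `N ⊗_R U` of a right `R`-module `N`
with a left `R`-module `U`, inside `N ⊗_ℤ U`. -/
def tensorRel (N : Type u) [AddCommGroup N] [Module Rᵐᵒᵖ N]
    (U : Type u) [AddCommGroup U] [Module R U] : Submodule ℤ (TensorProduct ℤ N U) :=
  Submodule.span ℤ {x | ∃ (r : R) (a : N) (v : U),
    x = (MulOpposite.op r • a) ⊗ₜ[ℤ] v - a ⊗ₜ[ℤ] (r • v)}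

/-- The tensor product `N ⊗_R U` of a right `R`-module `N` with a left `R`-module `U`
over a (possibly noncommutative) ring `R`, as an abelian group. -/
abbrev RTensor (N : Type u) [AddCommGroup N] [Module Rᵐᵒᵖ N]
    (U : Type u) [AddCommGroup U] [Module R U] : Type u :=
  TensorProduct ℤ N U ⧸ tensorRel R N U

/-- Functoriality of `RTensor` in both variables. -/
noncomputable def rtmap {N N' : Type u} [AddCommGroup N] [Module Rᵐᵒᵖ N]
    [AddCommGroup N'] [Module Rᵐᵒᵖ N']
    {U U' : Type u} [AddCommGroup U] [Module R U] [AddCommGroup U'] [Module R U']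
    (g : N →ₗ[Rᵐᵒᵖ] N') (f : U →ₗ[R] U') :
    RTensor R N U →ₗ[ℤ] RTensor R N' U' :=
  Submodule.mapQ (tensorRel R N U) (tensorRel R N' U')
    (TensorProduct.map g.toAddMonoidHom.toIntLinearMap f.toAddMonoidHom.toIntLinearMap)
    (by
      rw [tensorRel, Submodule.span_le]
      rintro x ⟨r, a, v, rfl⟩
      refine Submodule.mem_comap.mpr (Submodule.subset_span ⟨r, g a, f v, ?_⟩)
      refine (map_sub _ _ _).trans ?_
      congr 1
      · exact (TensorProduct.map_tmul _ _ _ _).trans (by simp [map_smul])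
      · exact (TensorProduct.map_tmul _ _ _ _).trans (by simp [map_smul]))

/-- A left `R`-module `M` is flat if `- ⊗_R M` preserves injections of right `R`-modules. -/
noncomputable def IsFlatModule (M : ModuleCat.{u} R) : Prop :=
  ∀ (A B : ModuleCat.{u} Rᵐᵒᵖ) (i : A →ₗ[Rᵐᵒᵖ] B), Function.Injective i →
    Function.Injective (rtmap R i (LinearMap.id (M := M)))

/-- A right `R`-module `N` is flat if `N ⊗_R -` preserves injections of left `R`-modules. -/
noncomputable def IsFlatRight (N : ModuleCat.{u} Rᵐᵒᵖ) : Prop :=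
  ∀ (A B : ModuleCat.{u} R) (i : A →ₗ[R] B), Function.Injective i →
    Function.Injective (rtmap R (LinearMap.id (M := N)) i)

/-- Flat dimension of a left `R`-module at most `m`. -/
noncomputable def FlatDimLE : ℕ → ModuleCat.{u} R → Prop
  | 0, K => IsFlatModule R K
  | m + 1, K => ∃ (P : ModuleCat.{u} R) (f : P →ₗ[R] K),
      IsFlatModule R P ∧ Function.Surjective f ∧
      FlatDimLE m (ModuleCat.of R (LinearMap.ker f))

/-- Finite flat dimension. -/
noncomputable def HasFiniteFlatDim (K : ModuleCat.{u} R) : Prop := ∃ m, FlatDimLE R m K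

variable (𝒳 : Set (ModuleCat.{u} R)) (n : ℕ)

/-- `Tor^R_k(N, U) = 0` for a right `R`-module `N` and a left `R`-module `U`, `k ≥ 1`:
by dimension shifting this says that for every `(k-1)`-st syzygy `K` of `U` and every
surjection `f : F → K` with `F` free, the induced map `N ⊗ ker f → N ⊗ F` is injective. -/
noncomputable def TorVanishes (k : ℕ) (N : ModuleCat.{u} Rᵐᵒᵖ) (U : ModuleCat.{u} R) : Prop :=
  ∀ (K : ModuleCat.{u} R), IsSyzygy R (k - 1) U K →
    ∀ (F : ModuleCat.{u} R) (f : F →ₗ[R] K), Module.Free R F → Function.Surjective f →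
      Function.Injective
        (rtmap R (LinearMap.id (M := N)) (LinearMap.ker f).subtype)

/-- `N` is an `n`-𝒳-flat right `R`-module: `Tor^R_n(N, U) = 0` for every
`n`-presented `U ∈ 𝒳`. -/
noncomputable def IsNXFlat (N : ModuleCat.{u} Rᵐᵒᵖ) : Prop :=
  ∀ U ∈ 𝒳, IsNPresented R n U → TorVanishes R n N U

/-- `N` has `n`-𝒳-flat dimension at most `m`:
`Tor^R_{n+i}(N, U) = 0` for all `i ≥ m + 1` and all `n`-presented `U ∈ 𝒳`. -/
noncomputable def NXFlatDimLE (m : ℕ) (N : ModuleCat.{u} Rᵐᵒᵖ) : Prop :=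
  ∀ U ∈ 𝒳, IsNPresented R n U → ∀ i : ℕ, m + 1 ≤ i → TorVanishes R (n + i) N U

/-- `N` has finite `n`-𝒳-flat dimension. -/
noncomputable def HasFiniteNXFlatDim (N : ModuleCat.{u} Rᵐᵒᵖ) : Prop := ∃ m, NXFlatDimLE R 𝒳 n m N

end Tensor

section Pure

variable (R : Type u) [Ring R] (𝒳 : Set (ModuleCat.{u} R)) (n : ℕ)

/-- A short exact sequence `0 → A → B → C → 0` of left `R`-modules (given by `i` and `p`)
is special 𝒳-pure if `0 → Hom(K, A) → Hom(K, B) → Hom(K, C) → 0` is exact for every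
special 𝒳-presented module `K`. -/
def IsSpecialXPure {A B C : Type u} [AddCommGroup A] [Module R A] [AddCommGroup B] [Module R B]
    [AddCommGroup C] [Module R C] (i : A →ₗ[R] B) (p : B →ₗ[R] C) : Prop :=
  ∀ K : ModuleCat.{u} R, IsSpecialPresented R 𝒳 n K →
    Function.Injective (fun g : K →ₗ[R] A => i.comp g) ∧
    Function.Exact (fun g : K →ₗ[R] A => i.comp g) (fun g : K →ₗ[R] B => p.comp g) ∧
    Function.Surjective (fun g : K →ₗ[R] B => p.comp g)

/-- A short exact sequence `0 → A → B → C → 0` of right `R`-modules (given by `i` and `p`)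
is special 𝒳-pure if `0 → A ⊗ K → B ⊗ K → C ⊗ K → 0` is exact for every special
𝒳-presented (left `R`-) module `K`. -/
noncomputable def IsSpecialXPureRight {A B C : Type u}
    [AddCommGroup A] [Module Rᵐᵒᵖ A] [AddCommGroup B] [Module Rᵐᵒᵖ B]
    [AddCommGroup C] [Module Rᵐᵒᵖ C] (i : A →ₗ[Rᵐᵒᵖ] B) (p : B →ₗ[Rᵐᵒᵖ] C) : Prop :=
  ∀ K : ModuleCat.{u} R, IsSpecialPresented R 𝒳 n K →
    Function.Injective (rtmap R i (LinearMap.id (M := K))) ∧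
    Function.Exact (rtmap R i (LinearMap.id (M := K))) (rtmap R p (LinearMap.id (M := K))) ∧
    Function.Surjective (rtmap R p (LinearMap.id (M := K)))

/-- `R` is self left `n`-𝒳-injective. -/
noncomputable def IsSelfNXInjective : Prop := IsNXInjective R 𝒳 n (ModuleCat.of R R)

end Pure

section Gorenstein

variable (R : Type u) [Ring R] (𝒳 : Set (ModuleCat.{u} R)) (n : ℕ)

/-- `G` is a Gorenstein `n`-𝒳-injective left `R`-module: there is an exact complex
`⋯ → A_1 → A_0 → A^0 → A^1 → ⋯` of `n`-𝒳-injective modules with `G = ker(A^0 → A^1)`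
which stays exact under `Hom_R(K, -)` for every special 𝒳-presented `K` of finite
projective dimension. -/
noncomputable def IsGorNXInjective (G : ModuleCat.{u} R) : Prop :=
  ∃ (C : ℤ → ModuleCat.{u} R) (d : ∀ i : ℤ, C i →ₗ[R] C (i - 1)),
    (∀ i, IsNXInjective R 𝒳 n (C i)) ∧
    (∀ i : ℤ, Function.Exact (d i) (d (i - 1))) ∧
    Nonempty (G ≃ₗ[R] LinearMap.ker (d 0)) ∧
    (∀ K : ModuleCat.{u} R, IsSpecialPresented R 𝒳 n K → HasFiniteProjDim R K →
      ∀ i : ℤ, Function.Exact (fun g : K →ₗ[R] C i => (d i).comp g)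
        (fun g : K →ₗ[R] C (i - 1) => (d (i - 1)).comp g))

/-- `G` is a Gorenstein `n`-𝒳-flat right `R`-module: there is an exact complex
`⋯ → F_1 → F_0 → F^0 → F^1 → ⋯` of `n`-𝒳-flat right modules with `G = ker(F^0 → F^1)`
which stays exact under `- ⊗_R K` for every special 𝒳-presented `K` of finite
flat dimension. -/
noncomputable def IsGorNXFlat (G : ModuleCat.{u} Rᵐᵒᵖ) : Prop :=
  ∃ (C : ℤ → ModuleCat.{u} Rᵐᵒᵖ) (d : ∀ i : ℤ, C i →ₗ[Rᵐᵒᵖ] C (i - 1)),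
    (∀ i, IsNXFlat R 𝒳 n (C i)) ∧
    (∀ i : ℤ, Function.Exact (d i) (d (i - 1))) ∧
    Nonempty (G ≃ₗ[Rᵐᵒᵖ] LinearMap.ker (d 0)) ∧
    (∀ K : ModuleCat.{u} R, IsSpecialPresented R 𝒳 n K → HasFiniteFlatDim R K →
      ∀ i : ℤ, Function.Exact (rtmap R (d i) (LinearMap.id (M := K)))
        (rtmap R (d (i - 1)) (LinearMap.id (M := K))))

end Gorenstein

section GorensteinAbsolute

/-- `G` is a Gorenstein injective module over `S`: there is an exact complex of injective
modules with `G = ker(E^0 → E^1)` which stays exact under `Hom(I, -)` for every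
injective module `I`. -/
noncomputable def IsGorensteinInjective (S : Type u) [Ring S] (G : ModuleCat.{u} S) : Prop :=
  ∃ (C : ℤ → ModuleCat.{u} S) (d : ∀ i : ℤ, C i →ₗ[S] C (i - 1)),
    (∀ i, Module.Injective S (C i)) ∧
    (∀ i : ℤ, Function.Exact (d i) (d (i - 1))) ∧
    Nonempty (G ≃ₗ[S] LinearMap.ker (d 0)) ∧
    (∀ I : ModuleCat.{u} S, Module.Injective S I →
      ∀ i : ℤ, Function.Exact (fun g : I →ₗ[S] C i => (d i).comp g)
        (fun g : I →ₗ[S] C (i - 1) => (d (i - 1)).comp g))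

/-- `G` is a Gorenstein projective module over `S`: there is an exact complex of projective
modules with `G = ker(P^0 → P^1)` which stays exact under `Hom(-, Q)` for every
projective module `Q`. -/
def IsGorensteinProjective (S : Type u) [Ring S] (G : ModuleCat.{u} S) : Prop :=
  ∃ (C : ℤ → ModuleCat.{u} S) (d : ∀ i : ℤ, C i →ₗ[S] C (i - 1)),
    (∀ i, Module.Projective S (C i)) ∧
    (∀ i : ℤ, Function.Exact (d i) (d (i - 1))) ∧
    Nonempty (G ≃ₗ[S] LinearMap.ker (d 0)) ∧
    (∀ Q : ModuleCat.{u} S, Module.Projective S Q →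
      ∀ i : ℤ, Function.Exact (fun g : C (i - 1 - 1) →ₗ[S] Q => g.comp (d (i - 1)))
        (fun g : C (i - 1) →ₗ[S] Q => g.comp (d i)))

variable (R : Type u) [Ring R]

/-- `G` is a Gorenstein flat left `R`-module: there is an exact complex of flat left modules
with `G = ker(F^0 → F^1)` which stays exact under `E ⊗_R -` for every injective right
`R`-module `E`. -/
noncomputable def IsGorensteinFlatLeft (G : ModuleCat.{u} R) : Prop :=
  ∃ (C : ℤ → ModuleCat.{u} R) (d : ∀ i : ℤ, C i →ₗ[R] C (i - 1)),
    (∀ i, IsFlatModule R (C i)) ∧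
    (∀ i : ℤ, Function.Exact (d i) (d (i - 1))) ∧
    Nonempty (G ≃ₗ[R] LinearMap.ker (d 0)) ∧
    (∀ E : ModuleCat.{u} Rᵐᵒᵖ, Module.Injective Rᵐᵒᵖ E →
      ∀ i : ℤ, Function.Exact (rtmap R (LinearMap.id (M := E)) (d i))
        (rtmap R (LinearMap.id (M := E)) (d (i - 1))))

/-- `G` is a Gorenstein flat right `R`-module: there is an exact complex of flat right modules
with `G = ker(F^0 → F^1)` which stays exact under `- ⊗_R E` for every injective left
`R`-module `E`. -/
noncomputable def IsGorensteinFlatRight (G : ModuleCat.{u} Rᵐᵒᵖ) : Prop :=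
  ∃ (C : ℤ → ModuleCat.{u} Rᵐᵒᵖ) (d : ∀ i : ℤ, C i →ₗ[Rᵐᵒᵖ] C (i - 1)),
    (∀ i, IsFlatRight R (C i)) ∧
    (∀ i : ℤ, Function.Exact (d i) (d (i - 1))) ∧
    Nonempty (G ≃ₗ[Rᵐᵒᵖ] LinearMap.ker (d 0)) ∧
    (∀ E : ModuleCat.{u} R, Module.Injective R E →
      ∀ i : ℤ, Function.Exact (rtmap R (d i) (LinearMap.id (M := E)))
        (rtmap R (d (i - 1)) (LinearMap.id (M := E))))

end GorensteinAbsolute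

/-! Take the componentwise product of the defining complexes. Products of modules are exact and
`Hom_R(K, ∏ Cᵢ) = ∏ Hom_R(K, Cᵢ)`; computing `Ext` with a projective resolution `P` of `U`, a
cocycle `Pₙ → ∏ Mⱼ` is a coboundary as soon as each of its components is. So the product complex
is again an exact complex of `n`-𝒳-injective modules that stays exact under `Hom_R(K, -)`, and its
kernel in degree `0` is the product of the kernels. -/

theorem Function.Exact.piMap {ι : Type*} {M N P : ι → Type*} [∀ i, Zero (P i)]
    {f : ∀ i, M i → N i} {g : ∀ i, N i → P i} (h : ∀ i, Function.Exact (f i) (g i)) :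
    Function.Exact (Pi.map f) (Pi.map g) := by
  intro y
  simp only [funext_iff, Pi.map_apply, Pi.zero_apply, Set.range_piMap, Set.mem_pi,
    Set.mem_univ, forall_const, h _ _]

section
variable {R : Type*} [Ring R] {ι : Type*}


theorem Function.Exact.postcomp_piMap {K : Type*} [AddCommGroup K] [Module R K]
    {M N P : ι → Type*} [∀ i, AddCommGroup (M i)] [∀ i, Module R (M i)]
    [∀ i, AddCommGroup (N i)] [∀ i, Module R (N i)]
    [∀ i, AddCommGroup (P i)] [∀ i, Module R (P i)]
    {f : ∀ i, M i →ₗ[R] N i} {g : ∀ i, N i →ₗ[R] P i}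
    (h : ∀ i, Function.Exact (fun φ : K →ₗ[R] M i => f i ∘ₗ φ) (fun φ => g i ∘ₗ φ)) :
    Function.Exact (fun φ : K →ₗ[R] ∀ i, M i => LinearMap.piMap f ∘ₗ φ)
      (fun φ => LinearMap.piMap g ∘ₗ φ) := by
  intro φ
  constructor
  · intro hφ
    have hcomp (i : ι) : ∃ ψ : K →ₗ[R] M i, f i ∘ₗ ψ = LinearMap.proj i ∘ₗ φ :=
      (h i _).1 (by ext x; exact congr_fun (LinearMap.congr_fun hφ x) i)
    choose ψ hψ using hcomp
    exact ⟨LinearMap.pi ψ, by ext x i; exact LinearMap.congr_fun (hψ i) x⟩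
  · rintro ⟨ψ, rfl⟩
    ext x i
    exact LinearMap.congr_fun ((h i).apply_apply_eq_zero (LinearMap.proj i ∘ₗ ψ)) x

def LinearMap.kerPiMapEquiv {M N : ι → Type*} [∀ i, AddCommGroup (M i)] [∀ i, Module R (M i)]
    [∀ i, AddCommGroup (N i)] [∀ i, Module R (N i)] (f : ∀ i, M i →ₗ[R] N i) :
    (∀ i, LinearMap.ker (f i)) ≃ₗ[R] LinearMap.ker (LinearMap.piMap f) where
  toFun x := ⟨fun i => x i, funext fun i => (x i).2⟩
  invFun y i := ⟨y.1 i, congr_fun y.2 i⟩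
  map_add' _ _ := rfl
  map_smul' _ _ := rfl
end

-- For `n = 0` the truncation gives `n - 1 = 0` and `d 0 0 = 0`, so the right side says `φ = 0`.
theorem CategoryTheory.ProjectiveResolution.extVanishes_iff {R : Type u} [Ring R]
    {U : ModuleCat.{u} R} (P : ProjectiveResolution U) (n : ℕ) (M : ModuleCat.{u} R) :
    ExtVanishes R n U M ↔ ∀ φ : P.complex.X n ⟶ M, P.complex.d (n + 1) n ≫ φ = 0 →
      ∃ ψ : P.complex.X (n - 1) ⟶ M, P.complex.d n (n - 1) ≫ ψ = φ := by
  have hprev : (ComplexShape.up ℕ).prev n = n - 1 := by cases n <;> simp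
  rw [ExtVanishes, ((forget _).mapIso (P.isoExt n M)).toEquiv.subsingleton_congr,
    ← ModuleCat.isZero_iff_subsingleton, ← HomologicalComplex.exactAt_iff_isZero_homology,
    HomologicalComplex.exactAt_iff' _ (n - 1) n (n + 1) hprev (by simp),
    ShortComplex.moduleCat_exact_iff]
  exact Iff.rfl

theorem extVanishes_pi {R : Type u} [Ring R] {n : ℕ} {U : ModuleCat.{u} R} {ι : Type u}
    {M : ι → ModuleCat.{u} R} (h : ∀ j, ExtVanishes R n U (M j)) :
    ExtVanishes R n U (ModuleCat.of R (∀ j, M j)) := by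
  let P := projectiveResolution U
  simp only [P.extVanishes_iff] at h ⊢
  intro φ hφ
  have hcomp (j : ι) : ∃ ψ : P.complex.X (n - 1) ⟶ M j,
      P.complex.d n (n - 1) ≫ ψ = φ ≫ ModuleCat.ofHom (LinearMap.proj j) :=
    h j _ (by rw [← Category.assoc, hφ, Limits.zero_comp])
  choose ψ hψ using hcomp
  refine ⟨ModuleCat.ofHom (LinearMap.pi fun j => (ψ j).hom), ?_⟩
  ext x j
  exact congr(($(hψ j)).hom x)

theorem IsNXInjective.pi {R : Type u} [Ring R] {𝒳 : Set (ModuleCat.{u} R)} {n : ℕ}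
    {ι : Type u} {M : ι → ModuleCat.{u} R} (h : ∀ j, IsNXInjective R 𝒳 n (M j)) :
    IsNXInjective R 𝒳 n (ModuleCat.of R (∀ j, M j)) :=
  fun U hU hUn => extVanishes_pi fun j => h j U hU hUn

theorem statement_10_general (R : Type u) [Ring R] (𝒳 : Set (ModuleCat.{u} R)) (n : ℕ)
    (I : Type u) (G : I → ModuleCat.{u} R)
    (hG : ∀ i, IsGorNXInjective R 𝒳 n (G i)) :
    IsGorNXInjective R 𝒳 n (ModuleCat.of R (∀ i, ↥(G i))) := by
  choose C d hC hexact hker hHom using hG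
  exact ⟨fun k => ModuleCat.of R (∀ i, C i k), fun k => LinearMap.piMap (d · k),
    fun k => IsNXInjective.pi fun i => hC i k,
    fun k => Function.Exact.piMap fun i => hexact i k,
    ⟨(LinearEquiv.piCongrRight fun i => (hker i).some).trans (LinearMap.kerPiMapEquiv _)⟩,
    fun K hK hfd k => Function.Exact.postcomp_piMap fun i => hHom i K hK hfd k⟩

/-- any direct product of Gorenstein `n`-𝒳-injective left `R`-modules is
Gorenstein `n`-𝒳-injective. -/
theorem statement_10 (R : Type u) [Ring R] (𝒳 : Set (ModuleCat.{u} R)) (n : ℕ) (hn : 1 ≤ n)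
    (I : Type u) (G : I → ModuleCat.{u} R)
    (hG : ∀ i, IsGorNXInjective R 𝒳 n (G i)) :
    IsGorNXInjective R 𝒳 n (ModuleCat.of R (∀ i, ↥(G i))) :=
  statement_10_general R 𝒳 n I G hG
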